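/- arXiv:1910.11826 — 4 statements merged into one kernel-verified Lean document; each statement's English description precedes it below -/
import Mathlib

section
/- Let P ⊂ ℝ² be a finite point cloud, p ∈ ℕ*, 𝐱 = [x_1,…,x_{n+p+1}] a (p+1)-regular knot vector with boundary knots x_{p+1} = a and x_{n+1} = b, and w_t : ℝ → [0,∞) a family of weight functions with Σ_{(x,y)∈P} w_{ξ^{(i)}}(x) > 0 for every knot average ξ^{(i)}. Fix μ with p+1 ≤ μ ≤ n and suppose x ∈ [x_μ, x_{μ+1}). Let P_μ := ⋃_{i=μ−p}^{μ} { (x,y) ∈ P : w_{ξ^{(i)}}(x) ≠ 0 }. Then α(μ) ≤ f_w(x) ≤ β(μ), where α(μ) := min{ y : (x,y) ∈ P_μ } and β(μ) := max{ y : (x,y) ∈ P_μ }, and in particular α(μ), β(μ) ∈ [y_min, y_max] whenever y_min ≤ y ≤ y_max for all (x,y) ∈ P. -/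
/-!
On `[x_μ, x_{μ+1})` only the B-splines `B_{μ-p}, …, B_μ` can be nonzero; they are nonnegative
and sum to one there, so `f_w(x)` is a convex combination of the control points `ŷ_w(ξ⁽ⁱ⁾)`,
`μ - p ≤ i ≤ μ`. Each of these is a weighted average of the `y`-values of the points with nonzero
weight `w_{ξ⁽ⁱ⁾}`, and all of these points lie in `P_μ`.

The knot vector is only known to be non-decreasing on the indices `1, …, n + p + 1`; it is first
extended to a monotone sequence on all of `ℕ`, which leaves `B_1, …, B_n` unchanged.
-/

/-- Univariate B-spline of degree `p` with local knot vector `t i, …, t (i+p+1)`,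
defined by the Cox–de Boor recursion (with the convention `0/0 = 0`, which is
automatic for real division in Lean). -/
noncomputable def Bspline (t : ℕ → ℝ) : ℕ → ℕ → ℝ → ℝ
  | 0, i, x => if t i ≤ x ∧ x < t (i + 1) then 1 else 0
  | p + 1, i, x =>
      (x - t i) / (t (i + p + 1) - t i) * Bspline t p i x +
        (t (i + p + 2) - x) / (t (i + p + 2) - t (i + 1)) * Bspline t p (i + 1) x

/-- The `i`-th knot average `ξ⁽ⁱ⁾ = (t_{i+1} + … + t_{i+p}) / p`. -/
noncomputable def knotAvg (t : ℕ → ℝ) (p i : ℕ) : ℝ :=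
  (∑ j ∈ Finset.Icc (i + 1) (i + p), t j) / p

/-- Control point estimator `ŷ_w(u)` of a point cloud `P ⊂ ℝ²` with weight family `w`. -/
noncomputable def ctrlEst (P : Finset (ℝ × ℝ)) (w : ℝ → ℝ → ℝ) (u : ℝ) : ℝ :=
  (∑ q ∈ P, q.2 * w u q.1) / (∑ q ∈ P, w u q.1)

/-- The weighted quasi-interpolant spline approximation (wQISA) of degree `p`
to the point cloud `P` over the knot vector `t` (with knots indexed `1, …, n+p+1`). -/
noncomputable def wQISA (P : Finset (ℝ × ℝ)) (p n : ℕ) (t : ℕ → ℝ) (w : ℝ → ℝ → ℝ)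
    (x : ℝ) : ℝ :=
  ∑ i ∈ Finset.Icc 1 n, ctrlEst P w (knotAvg t p i) * Bspline t p i x

/-- The set of `y`-values of the points of `P` that lie in
`P_μ = ⋃_{i=μ-p}^{μ} { (x,y) ∈ P : w_{ξ⁽ⁱ⁾}(x) ≠ 0 }`. -/
def PmuY (P : Finset (ℝ × ℝ)) (t : ℕ → ℝ) (w : ℝ → ℝ → ℝ) (p μ : ℕ) : Set ℝ :=
  {y | ∃ x', (x', y) ∈ P ∧ ∃ i, μ - p ≤ i ∧ i ≤ μ ∧ w (knotAvg t p i) x' ≠ 0}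

open Finset

section Bspline

variable {t : ℕ → ℝ}

lemma Bspline_congr {t' : ℕ → ℝ} (p i : ℕ) (h : ∀ j, i ≤ j → j ≤ i + p + 1 → t j = t' j)
    (x : ℝ) : Bspline t p i x = Bspline t' p i x := by
  induction p generalizing i with
  | zero => simp only [Bspline, h i le_rfl (by omega), h (i + 1) (by omega) le_rfl]
  | succ p ih =>
    simp only [Bspline]
    rw [ih i fun j h₁ h₂ => h j h₁ (by omega), ih (i + 1) fun j h₁ h₂ => h j (by omega) (by omega),
      h i le_rfl (by omega), h (i + 1) (by omega) (by omega),
      h (i + p + 1) (by omega) (by omega), h (i + p + 2) (by omega) le_rfl]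

lemma Bspline_eq_zero_of_lt (ht : Monotone t) (p : ℕ) {i : ℕ} {x : ℝ} (hx : x < t i) :
    Bspline t p i x = 0 := by
  induction p generalizing i with
  | zero => simp [Bspline, not_le.2 hx]
  | succ p ih => simp [Bspline, ih hx, ih (hx.trans_le (ht i.le_succ))]

lemma Bspline_eq_zero_of_le (ht : Monotone t) (p : ℕ) {i : ℕ} {x : ℝ} (hx : t (i + p + 1) ≤ x) :
    Bspline t p i x = 0 := by
  induction p generalizing i with
  | zero => simp [Bspline, not_lt.2 hx]
  | succ p ih =>
    have h1 : Bspline t p i x = 0 := ih ((ht (by omega)).trans hx)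
    have h2 : Bspline t p (i + 1) x = 0 :=
      ih (by rwa [show i + 1 + p + 1 = i + (p + 1) + 1 by omega])
    simp [Bspline, h1, h2]

lemma Bspline_nonneg (ht : Monotone t) (p i : ℕ) (x : ℝ) : 0 ≤ Bspline t p i x := by
  induction p generalizing i with
  | zero => simp only [Bspline]; split <;> norm_num
  | succ p ih =>
    have hleft : 0 ≤ (x - t i) / (t (i + p + 1) - t i) * Bspline t p i x := by
      rcases lt_or_ge x (t i) with h | h
      · rw [Bspline_eq_zero_of_lt ht p h, mul_zero]
      · exact mul_nonneg (div_nonneg (sub_nonneg.2 h) (sub_nonneg.2 (ht (by omega)))) (ih i)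
    have hright :
        0 ≤ (t (i + p + 2) - x) / (t (i + p + 2) - t (i + 1)) * Bspline t p (i + 1) x := by
      rcases le_or_gt (t (i + p + 2)) x with h | h
      · rw [Bspline_eq_zero_of_le ht p (by rwa [show i + 1 + p + 1 = i + p + 2 by omega]),
          mul_zero]
      · exact mul_nonneg (div_nonneg (sub_nonneg.2 h.le) (sub_nonneg.2 (ht (by omega)))) (ih _)
    exact add_nonneg hleft hright

lemma div_self_mul_Bspline (ht : Monotone t) (p j : ℕ) (x : ℝ) :
    (t (j + p + 1) - t j) / (t (j + p + 1) - t j) * Bspline t p j x = Bspline t p j x := by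
  rcases (ht (show j ≤ j + p + 1 by omega)).eq_or_lt with h | h
  · have hB : Bspline t p j x = 0 := by
      rcases lt_or_ge x (t j) with hx | hx
      · exact Bspline_eq_zero_of_lt ht p hx
      · exact Bspline_eq_zero_of_le ht p (h ▸ hx)
    rw [hB, mul_zero]
  · rw [div_self (sub_ne_zero.2 h.ne'), one_mul]

lemma sum_range_Bspline_eq_one (ht : Monotone t) (p ν : ℕ) {x : ℝ} (hx₁ : t (ν + p) ≤ x)
    (hx₂ : x < t (ν + p + 1)) :
    ∑ k ∈ range (p + 1), Bspline t p (ν + k) x = 1 := by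
  induction p generalizing ν with
  | zero =>
    rw [zero_add, sum_range_one, add_zero]
    exact if_pos ⟨hx₁, hx₂⟩
  | succ p ih =>
    rw [← add_assoc] at hx₁ hx₂
    have hfirst : Bspline t p ν x = 0 := Bspline_eq_zero_of_le ht p hx₁
    have hlast : Bspline t p (ν + p + 2) x = 0 := Bspline_eq_zero_of_lt ht p hx₂
    calc ∑ k ∈ range (p + 2), Bspline t (p + 1) (ν + k) x
        = ∑ k ∈ range (p + 2), (x - t (ν + k)) / (t (ν + k + p + 1) - t (ν + k)) *
              Bspline t p (ν + k) x +
          ∑ k ∈ range (p + 2), (t (ν + k + p + 2) - x) / (t (ν + k + p + 2) - t (ν + k + 1)) *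
              Bspline t p (ν + k + 1) x := sum_add_distrib
      _ = ∑ k ∈ range (p + 1), (x - t (ν + k + 1)) / (t (ν + k + 1 + p + 1) - t (ν + k + 1)) *
              Bspline t p (ν + k + 1) x +
          ∑ k ∈ range (p + 1),
            (t (ν + k + 1 + p + 1) - x) / (t (ν + k + 1 + p + 1) - t (ν + k + 1)) *
              Bspline t p (ν + k + 1) x := by
        rw [sum_range_succ', sum_range_succ _ (p + 1)]
        have hidx : ∀ k, ν + k + p + 2 = ν + k + 1 + p + 1 := fun k => by omega
        simp only [add_zero, hfirst, hlast, mul_zero, ← add_assoc, hidx]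
      _ = ∑ k ∈ range (p + 1), Bspline t p (ν + 1 + k) x := by
        rw [← sum_add_distrib]
        refine sum_congr rfl fun k _ => ?_
        rw [← add_mul, ← add_div, sub_add_sub_cancel', div_self_mul_Bspline ht, add_right_comm]
      _ = 1 := ih (ν + 1) (by rwa [add_right_comm])
          (by rwa [show ν + 1 + p + 1 = ν + p + 1 + 1 by omega])

lemma sum_mul_Bspline_mem_Icc (ht : Monotone t) {p μ : ℕ} (hpμ : p ≤ μ) {x : ℝ}
    (hx₁ : t μ ≤ x) (hx₂ : x < t (μ + 1)) {s : Finset ℕ} (hs : Icc (μ - p) μ ⊆ s) {c : ℕ → ℝ}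
    {m M : ℝ} (hc : ∀ i ∈ Icc (μ - p) μ, c i ∈ Set.Icc m M) :
    ∑ i ∈ s, c i * Bspline t p i x ∈ Set.Icc m M := by
  have hinactive : ∀ i ∈ s, i ∉ Icc (μ - p) μ → c i * Bspline t p i x = 0 := by
    intro i _ hi
    rw [mem_Icc, not_and_or, not_le, not_le] at hi
    rcases hi with hi | hi
    · rw [Bspline_eq_zero_of_le ht p ((ht (by omega)).trans hx₁), mul_zero]
    · rw [Bspline_eq_zero_of_lt ht p (hx₂.trans_le (ht hi)), mul_zero]
  have hunity : ∑ i ∈ Icc (μ - p) μ, Bspline t p i x = 1 := by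
    rw [← Ico_add_one_right_eq_Icc, sum_Ico_eq_sum_range,
      show μ + 1 - (μ - p) = p + 1 by omega]
    exact sum_range_Bspline_eq_one ht p (μ - p) (by rwa [Nat.sub_add_cancel hpμ])
      (by rwa [Nat.sub_add_cancel hpμ])
  rw [← sum_subset hs hinactive]
  simp_rw [mul_comm (c _), ← smul_eq_mul]
  exact (convex_Icc m M).sum_mem (fun i _ => Bspline_nonneg ht p i x) hunity hc

end Bspline

lemma exists_monotone_eqOn_Icc {β : Type*} [ConditionallyCompleteLinearOrder β] {f : ℕ → β}
    {a b : ℕ} (h : ∀ j, a ≤ j → j < b → f j ≤ f (j + 1)) :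
    ∃ g : ℕ → β, Monotone g ∧ Set.EqOn f g (Set.Icc a b) := by
  have hmon : MonotoneOn f (Set.Icc a b) :=
    monotoneOn_of_le_succ Set.ordConnected_Icc fun j _ hj hj' => by
      rw [Order.succ_eq_add_one] at hj' ⊢
      exact h j hj.1 hj'.2
  have hfin := (Set.finite_Icc a b).image f
  exact hmon.exists_monotone_extension hfin.bddBelow hfin.bddAbove

lemma ctrlEst_mem_Icc {P : Finset (ℝ × ℝ)} {w : ℝ → ℝ → ℝ} {u m M : ℝ}
    (hw : ∀ q ∈ P, 0 ≤ w u q.1) (hpos : 0 < ∑ q ∈ P, w u q.1)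
    (hy : ∀ q ∈ P, w u q.1 ≠ 0 → q.2 ∈ Set.Icc m M) : ctrlEst P w u ∈ Set.Icc m M := by
  have hterm : ∀ q ∈ P, m * w u q.1 ≤ q.2 * w u q.1 ∧ q.2 * w u q.1 ≤ M * w u q.1 := by
    intro q hq
    rcases eq_or_ne (w u q.1) 0 with h | h
    · simp [h]
    · exact ⟨mul_le_mul_of_nonneg_right (hy q hq h).1 (hw q hq),
        mul_le_mul_of_nonneg_right (hy q hq h).2 (hw q hq)⟩
  constructor
  · rw [ctrlEst, le_div_iff₀ hpos, mul_sum]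
    exact sum_le_sum fun q hq => (hterm q hq).1
  · rw [ctrlEst, div_le_iff₀ hpos, mul_sum]
    exact sum_le_sum fun q hq => (hterm q hq).2

section PmuY

variable {P : Finset (ℝ × ℝ)} {t : ℕ → ℝ} {w : ℝ → ℝ → ℝ} {p μ : ℕ}

lemma PmuY_subset_image_snd : PmuY P t w p μ ⊆ Prod.snd '' (P : Set (ℝ × ℝ)) :=
  fun y ⟨x', hxy, _⟩ => ⟨(x', y), hxy, rfl⟩

lemma PmuY_finite : (PmuY P t w p μ).Finite :=
  (P.finite_toSet.image Prod.snd).subset PmuY_subset_image_snd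

lemma PmuY_nonempty (h : 0 < ∑ q ∈ P, w (knotAvg t p μ) q.1) : (PmuY P t w p μ).Nonempty := by
  obtain ⟨q, hq, hqw⟩ := exists_ne_zero_of_sum_ne_zero h.ne'
  exact ⟨q.2, q.1, hq, μ, Nat.sub_le μ p, le_rfl, hqw⟩

lemma ctrlEst_mem_Icc_sInf_sSup_PmuY {i : ℕ} (hw : ∀ q ∈ P, 0 ≤ w (knotAvg t p i) q.1)
    (hpos : 0 < ∑ q ∈ P, w (knotAvg t p i) q.1) (hi : i ∈ Icc (μ - p) μ) :
    ctrlEst P w (knotAvg t p i) ∈ Set.Icc (sInf (PmuY P t w p μ)) (sSup (PmuY P t w p μ)) :=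
  ctrlEst_mem_Icc hw hpos fun q hq hqw =>
    have hmem : q.2 ∈ PmuY P t w p μ := ⟨q.1, hq, i, (mem_Icc.1 hi).1, (mem_Icc.1 hi).2, hqw⟩
    ⟨csInf_le PmuY_finite.bddBelow hmem, le_csSup PmuY_finite.bddAbove hmem⟩

end PmuY

theorem wQISA_local_bounds_general
    (P : Finset (ℝ × ℝ)) (p n : ℕ) (t : ℕ → ℝ)
    -- the knot vector is non-decreasing
    (hmono : ∀ j, 1 ≤ j → j ≤ n + p → t j ≤ t (j + 1))
    -- nonnegative weight family with positive total weight at every knot average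
    (w : ℝ → ℝ → ℝ) (hw : ∀ u x, 0 ≤ w u x)
    (hpos : ∀ i ∈ Finset.Icc 1 n, 0 < ∑ q ∈ P, w (knotAvg t p i) q.1)
    (μ : ℕ) (hμ1 : p + 1 ≤ μ) (hμ2 : μ ≤ n)
    (x : ℝ) (hx1 : t μ ≤ x) (hx2 : x < t (μ + 1)) :
    (sInf (PmuY P t w p μ) ≤ wQISA P p n t w x ∧
      wQISA P p n t w x ≤ sSup (PmuY P t w p μ)) ∧
    ∀ ymin ymax : ℝ, (∀ q ∈ P, ymin ≤ q.2 ∧ q.2 ≤ ymax) →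
      ymin ≤ sInf (PmuY P t w p μ) ∧ sSup (PmuY P t w p μ) ≤ ymax := by
  obtain ⟨t', ht', heq⟩ := exists_monotone_eqOn_Icc (a := 1) (b := n + p + 1) (f := t)
    fun j h₁ h₂ => hmono j h₁ (by omega)
  have hactive : Icc (μ - p) μ ⊆ Icc 1 n := fun i hi => by simp only [mem_Icc] at hi ⊢; omega
  have hwQISA :
      wQISA P p n t w x = ∑ i ∈ Icc 1 n, ctrlEst P w (knotAvg t p i) * Bspline t' p i x :=
    sum_congr rfl fun i hi => by
      rw [Bspline_congr p i fun j h₁ h₂ => heq ⟨by grind, by grind⟩]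
  have hx₁ : t' μ ≤ x := heq (show μ ∈ Set.Icc 1 (n + p + 1) from ⟨by omega, by omega⟩) ▸ hx1
  have hx₂ : x < t' (μ + 1) :=
    heq (show μ + 1 ∈ Set.Icc 1 (n + p + 1) from ⟨by omega, by omega⟩) ▸ hx2
  have hbounds := hwQISA ▸ sum_mul_Bspline_mem_Icc ht' (by omega) hx₁ hx₂ hactive fun i hi =>
    ctrlEst_mem_Icc_sInf_sSup_PmuY (fun _ _ => hw _ _) (hpos i (hactive hi)) hi
  have hne : (PmuY P t w p μ).Nonempty := PmuY_nonempty (hpos μ (mem_Icc.2 ⟨by omega, hμ2⟩))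
  refine ⟨hbounds, fun ymin ymax hY => ⟨le_csInf hne fun y hy => ?_, csSup_le hne fun y hy => ?_⟩⟩
  all_goals obtain ⟨q, hq, rfl⟩ := PmuY_subset_image_snd hy
  exacts [(hY q hq).1, (hY q hq).2]

/-- **Local bounds for the univariate wQISA.** For `x ∈ [x_μ, x_{μ+1})` with
`p+1 ≤ μ ≤ n`, the wQISA value is bounded by the extrema `α(μ) = min` and
`β(μ) = max` of the `y`-values of the points of `P_μ`; moreover
`α(μ), β(μ) ∈ [ymin, ymax]` whenever `ymin ≤ y ≤ ymax` on all of `P`. -/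
theorem wQISA_local_bounds
    (P : Finset (ℝ × ℝ)) (p n : ℕ) (hp : 0 < p) (t : ℕ → ℝ) (a b : ℝ)
    -- the knot vector is non-decreasing
    (hmono : ∀ j, 1 ≤ j → j ≤ n + p → t j ≤ t (j + 1))
    -- `(p+1)`-regularity
    (hn : p + 1 ≤ n)
    (hreg1 : t 1 = t (p + 1)) (hreg2 : t (n + 1) = t (n + p + 1))
    (hreg3 : ∀ j, 1 ≤ j → j ≤ n → t j < t (j + p + 1))
    -- boundary knots
    (ha : t (p + 1) = a) (hb : t (n + 1) = b)
    -- nonnegative weight family with positive total weight at every knot average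
    (w : ℝ → ℝ → ℝ) (hw : ∀ u x, 0 ≤ w u x)
    (hpos : ∀ i ∈ Finset.Icc 1 n, 0 < ∑ q ∈ P, w (knotAvg t p i) q.1)
    (μ : ℕ) (hμ1 : p + 1 ≤ μ) (hμ2 : μ ≤ n)
    (x : ℝ) (hx1 : t μ ≤ x) (hx2 : x < t (μ + 1)) :
    (sInf (PmuY P t w p μ) ≤ wQISA P p n t w x ∧
      wQISA P p n t w x ≤ sSup (PmuY P t w p μ)) ∧
    ∀ ymin ymax : ℝ, (∀ q ∈ P, ymin ≤ q.2 ∧ q.2 ≤ ymax) →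
      ymin ≤ sInf (PmuY P t w p μ) ∧ sSup (PmuY P t w p μ) ≤ ymax :=
  wQISA_local_bounds_general P p n t hmono w hw hpos μ hμ1 hμ2 x hx1 hx2
end

section
/- Consider the regression model Y_i = f(X_{i,1}, X_{i,2}) + ε_i, i = 1,…,N, with fixed (nonrandom) design points (X_{i,1}, X_{i,2}) ∈ ℝ², where the errors ε_i are independent, identically distributed real random variables with mean 0 and finite variance σ_ε². Let B_1,…,B_m : ℝ² → [0,1] be nonnegative functions forming a partition of unity at the evaluation point (X_1,X_2), and for each j = 1,…,m let w_j : ℝ² → [0,∞) be a weight function with Σ_{i=1}^N w_j(X_{i,1},X_{i,2}) > 0, and define the coefficient estimator ĉ_j := (Σ_{i=1}^N Y_i·w_j(X_{i,1},X_{i,2})) / (Σ_{i=1}^N w_j(X_{i,1},X_{i,2})). Then the estimator f̂_w(X_1,X_2) := Σ_{j=1}^m ĉ_j·B_j(X_1,X_2) satisfies Var[f̂_w(X_1,X_2)] ≤ σ_ε². -/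
/-!
Substituting `Y_i = f(X_i) + ε_i` and exchanging the sums over `i` and `j` writes `f̂_w(X₀)` as
a deterministic constant plus `∑_i a_i ε_i`, where `a_i = ∑_j B_j(X₀) w_j(X_i) / ∑_k w_j(X_k)`.
These weights are nonnegative and sum to `1` (partition of unity), so by independence
`Var[f̂_w(X₀)] = (∑_i a_i²) σ_ε² ≤ (∑_i a_i)² σ_ε² = σ_ε²`.
-/

open MeasureTheory ProbabilityTheory

section SmootherWeight

variable {ι κ : Type*} [Fintype ι] [Fintype κ]

noncomputable def smootherWeight (b : κ → ℝ) (w : κ → ι → ℝ) (i : ι) : ℝ :=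
  ∑ j, b j * (w j i / ∑ k, w j k)

theorem sum_weightedMean_mul_eq_sum_smootherWeight_mul (b : κ → ℝ) (w : κ → ι → ℝ)
    (y : ι → ℝ) :
    ∑ j, (∑ i, y i * w j i) / (∑ k, w j k) * b j = ∑ i, smootherWeight b w i * y i := by
  simp only [smootherWeight, Finset.sum_div, Finset.sum_mul]
  rw [Finset.sum_comm]
  refine Finset.sum_congr rfl fun i _ => Finset.sum_congr rfl fun j _ => ?_
  ring

theorem smootherWeight_nonneg {b : κ → ℝ} {w : κ → ι → ℝ} (hb : ∀ j, 0 ≤ b j)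
    (hw : ∀ j i, 0 ≤ w j i) (i : ι) : 0 ≤ smootherWeight b w i :=
  Finset.sum_nonneg fun j _ =>
    mul_nonneg (hb j) (div_nonneg (hw j i) (Finset.sum_nonneg fun k _ => hw j k))

theorem sum_smootherWeight {b : κ → ℝ} {w : κ → ι → ℝ} (hb : ∑ j, b j = 1)
    (hw : ∀ j, ∑ k, w j k ≠ 0) : ∑ i, smootherWeight b w i = 1 := by
  simpa [smootherWeight, Finset.sum_comm (γ := ι), ← Finset.mul_sum, ← Finset.sum_div,
    div_self (hw _)] using hb

end SmootherWeight

section LinearSmoother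

variable {ι Ω : Type*} [Fintype ι] [MeasurableSpace Ω] {μ : Measure Ω}

theorem variance_sum_mul_of_iIndepFun {ε : ι → Ω → ℝ} (hindep : iIndepFun ε μ)
    (hL2 : ∀ i, MemLp (ε i) 2 μ) (a : ι → ℝ) :
    variance (fun ω => ∑ i, a i * ε i ω) μ = ∑ i, a i ^ 2 * variance (ε i) μ := by
  have hsum : (fun ω => ∑ i, a i * ε i ω) = ∑ i, fun ω => a i * ε i ω := by
    funext ω; simp only [Finset.sum_apply]
  rw [hsum, IndepFun.variance_sum (fun i _ => (hL2 i).const_mul (a i))]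
  · simp only [variance_const_mul]
  · intro i _ j _ hij
    exact (hindep.indepFun hij).comp (measurable_const_mul (a i)) (measurable_const_mul (a j))

theorem variance_linearSmoother_le [IsProbabilityMeasure μ] {ε : ι → Ω → ℝ}
    (hindep : iIndepFun ε μ) (hL2 : ∀ i, MemLp (ε i) 2 μ) {σ2 : ℝ}
    (hvar : ∀ i, variance (ε i) μ = σ2) {a : ι → ℝ} (ha0 : ∀ i, 0 ≤ a i)
    (ha1 : ∑ i, a i = 1) (m : ι → ℝ) :
    variance (fun ω => ∑ i, a i * (m i + ε i ω)) μ ≤ σ2 := by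
  have hsplit : (fun ω => ∑ i, a i * (m i + ε i ω)) =
      fun ω => ∑ i, a i * m i + ∑ i, a i * ε i ω := by
    funext ω; simp only [mul_add, Finset.sum_add_distrib]
  have hmeas : AEStronglyMeasurable (fun ω => ∑ i, a i * ε i ω) μ :=
    Finset.aestronglyMeasurable_fun_sum _ fun i _ => ((hL2 i).const_mul (a i)).1
  obtain ⟨i₀, -⟩ := Finset.exists_ne_zero_of_sum_ne_zero (ha1.trans_ne one_ne_zero)
  have hσ : 0 ≤ σ2 := hvar i₀ ▸ variance_nonneg _ _
  calc variance (fun ω => ∑ i, a i * (m i + ε i ω)) μ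
      = (∑ i, a i ^ 2) * σ2 := by
        rw [hsplit, variance_const_add hmeas, variance_sum_mul_of_iIndepFun hindep hL2,
          Finset.sum_mul]
        simp only [hvar]
    _ ≤ (∑ i, a i) ^ 2 * σ2 := by
        gcongr
        exact Finset.sum_sq_le_sq_sum_of_nonneg fun i _ => ha0 i
    _ = σ2 := by rw [ha1, one_pow, one_mul]

end LinearSmoother

theorem wQISA_variance_le_general
    {Ω : Type*} [MeasurableSpace Ω] (μ : Measure Ω) [IsProbabilityMeasure μ]
    (N m : ℕ) (X : Fin N → ℝ × ℝ) (f : ℝ × ℝ → ℝ) (σε2 : ℝ)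
    -- the errors: independent, identically distributed, mean 0, variance σε2
    (ε : Fin N → Ω → ℝ)
    (hindep : iIndepFun ε μ)
    (hL2 : ∀ i, MemLp (ε i) 2 μ)
    (hvar : ∀ i, variance (ε i) μ = σε2)
    -- the observations
    (Y : Fin N → Ω → ℝ) (hY : ∀ i ω, Y i ω = f (X i) + ε i ω)
    -- nonnegative functions with values in [0,1] forming a partition of unity at X₀
    (B : Fin m → ℝ × ℝ → ℝ) (X₀ : ℝ × ℝ)
    (hB0 : ∀ j v, 0 ≤ B j v)
    (hpart : ∑ j, B j X₀ = 1)
    -- nonnegative weight functions with positive total weight on the design points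
    (w : Fin m → ℝ × ℝ → ℝ) (hw : ∀ j v, 0 ≤ w j v)
    (hwpos : ∀ j, 0 < ∑ i, w j (X i))
    -- the coefficient estimators and the wQISA estimator at X₀
    (c : Fin m → Ω → ℝ)
    (hc : ∀ j ω, c j ω = (∑ i, Y i ω * w j (X i)) / (∑ i, w j (X i)))
    (fhat : Ω → ℝ) (hfhat : ∀ ω, fhat ω = ∑ j, c j ω * B j X₀) :
    variance fhat μ ≤ σε2 := by
  set a := smootherWeight (fun j => B j X₀) (fun j i => w j (X i))
  have hfhat' : fhat = fun ω => ∑ i, a i * (f (X i) + ε i ω) := by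
    funext ω
    simp only [hfhat, hc, ← hY]
    exact sum_weightedMean_mul_eq_sum_smootherWeight_mul _ _ _
  rw [hfhat']
  exact variance_linearSmoother_le hindep hL2 hvar
    (smootherWeight_nonneg (fun j => hB0 j X₀) (fun j i => hw j (X i)))
    (sum_smootherWeight hpart fun j => (hwpos j).ne') _

/-- **Variance bound for the wQISA estimator.** In the fixed-design regression model
`Y_i = f(X_i) + ε_i` with i.i.d. errors of mean `0` and finite variance `σε2`, the
wQISA estimator `f̂_w(X₀) = ∑_j ĉ_j B_j(X₀)`, with coefficient estimators
`ĉ_j = (∑_i Y_i w_j(X_i)) / (∑_i w_j(X_i))` and `B_j : ℝ² → [0,1]` forming a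
partition of unity at `X₀`, satisfies `Var[f̂_w(X₀)] ≤ σε2`. -/
theorem wQISA_variance_le
    {Ω : Type*} [MeasurableSpace Ω] (μ : Measure Ω) [IsProbabilityMeasure μ]
    (N m : ℕ) (X : Fin N → ℝ × ℝ) (f : ℝ × ℝ → ℝ) (σε2 : ℝ)
    -- the errors: independent, identically distributed, mean 0, variance σε2
    (ε : Fin N → Ω → ℝ)
    (hmeas : ∀ i, Measurable (ε i))
    (hindep : iIndepFun ε μ)
    (hident : ∀ i j, IdentDistrib (ε i) (ε j) μ μ)
    (hL2 : ∀ i, MemLp (ε i) 2 μ)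
    (hmean : ∀ i, μ[ε i] = 0)
    (hvar : ∀ i, variance (ε i) μ = σε2)
    -- the observations
    (Y : Fin N → Ω → ℝ) (hY : ∀ i ω, Y i ω = f (X i) + ε i ω)
    -- nonnegative functions with values in [0,1] forming a partition of unity at X₀
    (B : Fin m → ℝ × ℝ → ℝ) (X₀ : ℝ × ℝ)
    (hB0 : ∀ j v, 0 ≤ B j v) (hB1 : ∀ j v, B j v ≤ 1)
    (hpart : ∑ j, B j X₀ = 1)
    -- nonnegative weight functions with positive total weight on the design points
    (w : Fin m → ℝ × ℝ → ℝ) (hw : ∀ j v, 0 ≤ w j v)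
    (hwpos : ∀ j, 0 < ∑ i, w j (X i))
    -- the coefficient estimators and the wQISA estimator at X₀
    (c : Fin m → Ω → ℝ)
    (hc : ∀ j ω, c j ω = (∑ i, Y i ω * w j (X i)) / (∑ i, w j (X i)))
    (fhat : Ω → ℝ) (hfhat : ∀ ω, fhat ω = ∑ j, c j ω * B j X₀) :
    variance fhat μ ≤ σε2 :=
  wQISA_variance_le_general μ N m X f σε2 ε hindep hL2 hvar Y hY B X₀ hB0 hpart w hw hwpos c hc fhat
    hfhat
end

section
/- Consider the regression model Y_i = f(X_{i,1}, X_{i,2}) + ε_i, i = 1,…,N, with fixed design points and i.i.d. errors ε_i with mean 0. Let B_1,…,B_m : ℝ² → [0,1] be nonnegative functions that form a partition of unity at the evaluation point (X_1,X_2), and for each j let w_j : ℝ² → [0,∞) be a weight function with positive total weight over the design points, with coefficient estimators ĉ_j := (Σ_i Y_i·w_j(X_{i,1},X_{i,2})) / (Σ_i w_j(X_{i,1},X_{i,2})) and f̂_w(X_1,X_2) := Σ_j ĉ_j·B_j(X_1,X_2). Let I := ⋃_{j : B_j(X_1,X_2) ≠ 0} { i : w_j(X_{i,1},X_{i,2})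 ≠ 0 } be the set of design indices effectively contributing at (X_1,X_2). Then α ≤ E[f̂_w(X_1,X_2)] ≤ β, where α := min_{i ∈ I} f(X_{i,1},X_{i,2}) and β := max_{i ∈ I} f(X_{i,1},X_{i,2}). -/
open MeasureTheory ProbabilityTheory

/-!
Since the errors have mean zero, `E[ĉ_j]` is the average of the values `f(X_i)` weighted by
`w_j(X_i)`, and `E[f̂_w(X₀)]` is the average of the `E[ĉ_j]` weighted by the partition of unity
`B_j(X₀)`. A weighted average of nonnegative weights lies between the smallest and the largest
value carrying nonzero weight, and every value reached through a nonzero `B_j(X₀)` and a nonzero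
`w_j(X_i)` is some `f(X_i)` with `i ∈ I`.
-/

theorem Finset.div_sum_mem_Icc_of_forall_ne_zero {ι : Type*} (s : Finset ι) {w g : ι → ℝ}
    {a b : ℝ} (hw : ∀ i ∈ s, 0 ≤ w i) (hpos : 0 < ∑ i ∈ s, w i)
    (hg : ∀ i ∈ s, w i ≠ 0 → g i ∈ Set.Icc a b) :
    (∑ i ∈ s, g i * w i) / ∑ i ∈ s, w i ∈ Set.Icc a b := by
  have bound : ∀ i ∈ s, a * w i ≤ g i * w i ∧ g i * w i ≤ b * w i := fun i hi => by
    rcases eq_or_ne (w i) 0 with h | h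
    · simp [h]
    · exact ⟨mul_le_mul_of_nonneg_right (hg i hi h).1 (hw i hi),
        mul_le_mul_of_nonneg_right (hg i hi h).2 (hw i hi)⟩
  constructor
  · rw [le_div_iff₀ hpos, Finset.mul_sum]
    exact Finset.sum_le_sum fun i hi => (bound i hi).1
  · rw [div_le_iff₀ hpos, Finset.mul_sum]
    exact Finset.sum_le_sum fun i hi => (bound i hi).2

theorem integral_finsetSum_mul_const {Ω ι : Type*} [MeasurableSpace Ω] {μ : Measure Ω}
    {s : Finset ι} {Y : ι → Ω → ℝ} (hY : ∀ i ∈ s, Integrable (Y i) μ) (a : ι → ℝ) :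
    ∫ ω, ∑ i ∈ s, Y i ω * a i ∂μ = ∑ i ∈ s, (∫ ω, Y i ω ∂μ) * a i := by
  rw [integral_finsetSum _ fun i hi => (hY i hi).mul_const _]
  simp only [integral_mul_const]

theorem wQISA_mean_bounds_general
    {Ω : Type*} [MeasurableSpace Ω] (μ : Measure Ω) [IsProbabilityMeasure μ]
    (N m : ℕ) (X : Fin N → ℝ × ℝ) (f : ℝ × ℝ → ℝ)
    -- the errors: independent, identically distributed, integrable with mean 0
    (ε : Fin N → Ω → ℝ)
    (hint : ∀ i, Integrable (ε i) μ)
    (hmean : ∀ i, μ[ε i] = 0)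
    -- the observations
    (Y : Fin N → Ω → ℝ) (hY : ∀ i ω, Y i ω = f (X i) + ε i ω)
    -- nonnegative functions with values in [0,1] forming a partition of unity at X₀
    (B : Fin m → ℝ × ℝ → ℝ) (X₀ : ℝ × ℝ)
    (hB0 : ∀ j v, 0 ≤ B j v)
    (hpart : ∑ j, B j X₀ = 1)
    -- nonnegative weight functions with positive total weight on the design points
    (w : Fin m → ℝ × ℝ → ℝ) (hw : ∀ j v, 0 ≤ w j v)
    (hwpos : ∀ j, 0 < ∑ i, w j (X i))
    -- the coefficient estimators and the wQISA estimator at X₀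
    (c : Fin m → Ω → ℝ)
    (hc : ∀ j ω, c j ω = (∑ i, Y i ω * w j (X i)) / (∑ i, w j (X i)))
    (fhat : Ω → ℝ) (hfhat : ∀ ω, fhat ω = ∑ j, c j ω * B j X₀) :
    sInf ((fun i => f (X i)) '' {i | ∃ j, B j X₀ ≠ 0 ∧ w j (X i) ≠ 0}) ≤ μ[fhat] ∧
    μ[fhat] ≤ sSup ((fun i => f (X i)) '' {i | ∃ j, B j X₀ ≠ 0 ∧ w j (X i) ≠ 0}) := by
  set T := (fun i => f (X i)) '' {i | ∃ j, B j X₀ ≠ 0 ∧ w j (X i) ≠ 0}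
  have hT : T.Finite := Set.toFinite T
  have hYint : ∀ i, Integrable (Y i) μ := fun i => by
    rw [funext (hY i)]; exact (integrable_const _).add (hint i)
  have hEY : ∀ i, μ[Y i] = f (X i) := fun i => by
    rw [funext (hY i), integral_add (integrable_const _) (hint i), hmean i]; simp
  have hcint : ∀ j, Integrable (c j) μ := fun j => by
    rw [funext (hc j)]
    exact (integrable_finsetSum _ fun i _ => (hYint i).mul_const _).div_const _
  have hEc : ∀ j, μ[c j] = (∑ i, f (X i) * w j (X i)) / ∑ i, w j (X i) := fun j => by
    rw [funext (hc j), integral_div, integral_finsetSum_mul_const fun i _ => hYint i]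
    simp only [hEY]
  have hEf : μ[fhat] = (∑ j, μ[c j] * B j X₀) / ∑ j, B j X₀ := by
    rw [funext hfhat, integral_finsetSum_mul_const fun j _ => hcint j, hpart, div_one]
  rw [hEf, ← Set.mem_Icc]
  refine Finset.univ.div_sum_mem_Icc_of_forall_ne_zero (fun j _ => hB0 j X₀)
    (hpart ▸ one_pos) fun j _ hj => hEc j ▸ ?_
  refine Finset.univ.div_sum_mem_Icc_of_forall_ne_zero (fun i _ => hw j (X i)) (hwpos j)
    fun i _ hi => ?_
  have hmem : f (X i) ∈ T := ⟨i, ⟨j, hj, hi⟩, rfl⟩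
  exact ⟨csInf_le hT.bddBelow hmem, le_csSup hT.bddAbove hmem⟩

/-- **Bounds on the expectation of the wQISA estimator.** In the fixed-design
regression model `Y_i = f(X_i) + ε_i` with i.i.d. errors of mean `0`, the wQISA
estimator `f̂_w(X₀) = ∑_j ĉ_j B_j(X₀)` satisfies `α ≤ E[f̂_w(X₀)] ≤ β`, where `α` and
`β` are the minimum and maximum of `f(X_i)` over the design indices effectively
contributing at `X₀`, i.e. `I = ⋃_{j : B_j(X₀) ≠ 0} { i : w_j(X_i) ≠ 0 }`. -/
theorem wQISA_mean_bounds
    {Ω : Type*} [MeasurableSpace Ω] (μ : Measure Ω) [IsProbabilityMeasure μ]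
    (N m : ℕ) (X : Fin N → ℝ × ℝ) (f : ℝ × ℝ → ℝ)
    -- the errors: independent, identically distributed, integrable with mean 0
    (ε : Fin N → Ω → ℝ)
    (hmeas : ∀ i, Measurable (ε i))
    (hindep : iIndepFun ε μ)
    (hident : ∀ i j, IdentDistrib (ε i) (ε j) μ μ)
    (hint : ∀ i, Integrable (ε i) μ)
    (hmean : ∀ i, μ[ε i] = 0)
    -- the observations
    (Y : Fin N → Ω → ℝ) (hY : ∀ i ω, Y i ω = f (X i) + ε i ω)
    -- nonnegative functions with values in [0,1] forming a partition of unity at X₀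
    (B : Fin m → ℝ × ℝ → ℝ) (X₀ : ℝ × ℝ)
    (hB0 : ∀ j v, 0 ≤ B j v) (hB1 : ∀ j v, B j v ≤ 1)
    (hpart : ∑ j, B j X₀ = 1)
    -- nonnegative weight functions with positive total weight on the design points
    (w : Fin m → ℝ × ℝ → ℝ) (hw : ∀ j v, 0 ≤ w j v)
    (hwpos : ∀ j, 0 < ∑ i, w j (X i))
    -- the coefficient estimators and the wQISA estimator at X₀
    (c : Fin m → Ω → ℝ)
    (hc : ∀ j ω, c j ω = (∑ i, Y i ω * w j (X i)) / (∑ i, w j (X i)))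
    (fhat : Ω → ℝ) (hfhat : ∀ ω, fhat ω = ∑ j, c j ω * B j X₀) :
    sInf ((fun i => f (X i)) '' {i | ∃ j, B j X₀ ≠ 0 ∧ w j (X i) ≠ 0}) ≤ μ[fhat] ∧
    μ[fhat] ≤ sSup ((fun i => f (X i)) '' {i | ∃ j, B j X₀ ≠ 0 ∧ w j (X i) ≠ 0}) :=
  wQISA_mean_bounds_general μ N m X f ε hint hmean Y hY B X₀ hB0 hpart w hw hwpos c hc fhat hfhat
end

section
/- Consider the regression model Y_i = f(X_{i,1}, X_{i,2}) + ε_i, i = 1,…,N, with fixed design points and i.i.d. errors ε_i with mean 0 and finite variance σ_ε². Fix k ∈ ℕ* with k ≤ N, and for each index j let the weight w_j be the k-nearest-neighbor weight centered at a point u_j ∈ ℝ²: w_j(x) = 1/k if x is among the k design points closest to u_j and 0 otherwise (so each w_j selects exactly k design points). Let B_1,…,B_m : ℝ² → [0,1] be nonnegative functions forming a partition of unity at (X_1,X_2), ĉ_j := (Σ_i Y_i·w_j(X_{i,1},X_{i,2})) / (Σ_i w_j(X_{i,1},X_{i,2})), and f̂_w(X_1,X_2) := Σ_j ĉ_j·B_j(X_1,X_2).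 Then Var[f̂_w(X_1,X_2)] = σ_ε² · Σ_i Σ_j (k_{i,j}/k²)·B_i(X_1,X_2)·B_j(X_1,X_2) ≤ σ_ε²/k, where k_{i,j} is the number of design points common to the k nearest neighbors of u_i and of u_j. -/
/-!
Since each k-NN weight row sums to `1`, the estimator is a linear smoother
`f̂_w(X₀) = ∑ᵢ aᵢ Yᵢ` with equivalent weights `aᵢ = ∑ⱼ wⱼ(Xᵢ) Bⱼ(X₀)`. The deterministic part
`∑ᵢ aᵢ f(Xᵢ)` does not contribute, so independence gives `Var = σε² ∑ᵢ aᵢ²`, and expanding the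
square produces the Gram entries `∑ᵢ wₚ(Xᵢ) w_q(Xᵢ) = |Sₚ ∩ S_q| / k²`. The `aᵢ` form a
probability vector whose entries are convex combinations of values in `{0, 1/k}`, hence
`∑ᵢ aᵢ² ≤ maxᵢ aᵢ ≤ 1/k`.
-/

open MeasureTheory ProbabilityTheory Finset

theorem ProbabilityTheory.iIndepFun.variance_const_add_sum_mul {Ω ι : Type*}
    [MeasurableSpace Ω] {μ : Measure Ω} [IsProbabilityMeasure μ] [Fintype ι]
    {ε : ι → Ω → ℝ} (hindep : iIndepFun ε μ) (hL2 : ∀ i, MemLp (ε i) 2 μ) (C : ℝ)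
    (a : ι → ℝ) :
    variance (fun ω ↦ C + ∑ i, a i * ε i ω) μ = ∑ i, a i ^ 2 * variance (ε i) μ := by
  have hterm : ∀ i ∈ (univ : Finset ι), MemLp (fun ω ↦ a i * ε i ω) 2 μ :=
    fun i _ ↦ (hL2 i).const_mul (a i)
  have hsum : (fun ω ↦ ∑ i, a i * ε i ω) = ∑ i, fun ω ↦ a i * ε i ω := (sum_fn _ _).symm
  rw [variance_const_add (hsum ▸ (memLp_finsetSum' _ hterm).aestronglyMeasurable), hsum,
    IndepFun.variance_sum hterm]
  · simp_rw [variance_const_mul]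
  · intro i _ j _ hij
    exact (hindep.indepFun hij).comp (measurable_const_mul _) (measurable_const_mul _)

section

variable {ι κ : Type*} [Fintype ι] [Fintype κ]

theorem sum_mul_le_of_le_of_sum_eq_one {x b : ι → ℝ} {r : ℝ} (hx : ∀ i, x i ≤ r)
    (hb : ∀ i, 0 ≤ b i) (hb1 : ∑ i, b i = 1) : ∑ i, x i * b i ≤ r :=
  calc ∑ i, x i * b i ≤ ∑ i, r * b i :=
        sum_le_sum fun i _ ↦ mul_le_mul_of_nonneg_right (hx i) (hb i)
    _ = r := by rw [← mul_sum, hb1, mul_one]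

theorem sum_ite_mem_one_div [DecidableEq ι] {s : Finset ι} {k : ℕ} (hs : #s = k) (hk : k ≠ 0) :
    ∑ i, (if i ∈ s then (1 : ℝ) / k else 0) = 1 := by
  rw [sum_ite_mem, univ_inter, sum_const, hs, nsmul_eq_mul, mul_one_div, div_self]
  exact Nat.cast_ne_zero.mpr hk

theorem sum_ite_mem_mul_ite_mem [DecidableEq ι] (s t : Finset ι) (c : ℝ) :
    ∑ i, (if i ∈ s then c else 0) * (if i ∈ t then c else 0) = #(s ∩ t) * c ^ 2 := by
  simp_rw [ite_zero_mul_ite_zero, ← mem_inter, ← sq]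
  rw [sum_ite_mem, univ_inter, sum_const, nsmul_eq_mul]

theorem sum_sum_mul_mul_comm (y : ι → ℝ) (W : κ → ι → ℝ) (b : κ → ℝ) :
    ∑ j, (∑ i, y i * W j i) * b j = ∑ i, (∑ j, W j i * b j) * y i := by
  simp_rw [sum_mul]
  rw [sum_comm]
  exact sum_congr rfl fun i _ ↦ sum_congr rfl fun j _ ↦ by ring

theorem sum_sq_sum_mul (W : κ → ι → ℝ) (b : κ → ℝ) :
    ∑ i, (∑ j, W j i * b j) ^ 2 = ∑ p, ∑ q, (∑ i, W p i * W q i) * b p * b q := by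
  simp_rw [sq, sum_mul_sum, sum_mul]
  rw [sum_comm]
  refine sum_congr rfl fun p _ ↦ ?_
  rw [sum_comm]
  exact sum_congr rfl fun q _ ↦ sum_congr rfl fun i _ ↦ by ring

end

theorem wQISA_kNN_variance_general
    {Ω : Type*} [MeasurableSpace Ω] (μ : Measure Ω) [IsProbabilityMeasure μ]
    (N m k : ℕ) (hk : 0 < k)
    (X : Fin N → ℝ × ℝ) (f : ℝ × ℝ → ℝ) (σε2 : ℝ)
    -- the errors: independent, identically distributed, mean 0, variance σε2
    (ε : Fin N → Ω → ℝ)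
    (hindep : iIndepFun ε μ)
    (hL2 : ∀ i, MemLp (ε i) 2 μ)
    (hvar : ∀ i, variance (ε i) μ = σε2)
    -- the observations
    (Y : Fin N → Ω → ℝ) (hY : ∀ i ω, Y i ω = f (X i) + ε i ω)
    -- nonnegative functions with values in [0,1] forming a partition of unity at X₀
    (B : Fin m → ℝ × ℝ → ℝ) (X₀ : ℝ × ℝ)
    (hB0 : ∀ j v, 0 ≤ B j v)
    (hpart : ∑ j, B j X₀ = 1)
    -- the k-NN weights: `S j` is the set of the k design points closest to `u j`,
    -- and `w j` equals `1/k` on it and `0` on the other design points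
    (S : Fin m → Finset (Fin N))
    (hScard : ∀ j, (S j).card = k)
    (w : Fin m → ℝ × ℝ → ℝ)
    (hw : ∀ j i, w j (X i) = if i ∈ S j then (1 : ℝ) / k else 0)
    -- the coefficient estimators and the wQISA estimator at X₀
    (c : Fin m → Ω → ℝ)
    (hc : ∀ j ω, c j ω = (∑ i, Y i ω * w j (X i)) / (∑ i, w j (X i)))
    (fhat : Ω → ℝ) (hfhat : ∀ ω, fhat ω = ∑ j, c j ω * B j X₀) :
    variance fhat μ =
      σε2 * ∑ i, ∑ j, (((S i ∩ S j).card : ℝ) / (k : ℝ) ^ 2) * B i X₀ * B j X₀ ∧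
    variance fhat μ ≤ σε2 / k := by
  set a : Fin N → ℝ := fun i ↦ ∑ j, w j (X i) * B j X₀
  have hrow : ∀ j, ∑ i, w j (X i) = 1 := fun j ↦ by
    simp_rw [hw]; exact sum_ite_mem_one_div (hScard j) hk.ne'
  have ha_sum : ∑ i, a i = 1 := by
    simp only [a]
    rw [sum_comm]
    simp only [← sum_mul, hrow, one_mul, hpart]
  have ha_nonneg : ∀ i, 0 ≤ a i := fun i ↦
    sum_nonneg fun j _ ↦ mul_nonneg (by rw [hw]; positivity) (hB0 j X₀)
  have ha_le : ∀ i, a i ≤ 1 / k := fun i ↦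
    sum_mul_le_of_le_of_sum_eq_one (fun j ↦ by rw [hw]; split_ifs <;> simp) (hB0 · X₀) hpart
  have hfhat_eq : fhat = fun ω ↦ ∑ i, a i * f (X i) + ∑ i, a i * ε i ω := by
    funext ω
    simp_rw [hfhat, hc, hrow, div_one, sum_sum_mul_mul_comm, hY, mul_add, sum_add_distrib]
    rfl
  have hvar_fhat : variance fhat μ = σε2 * ∑ i, a i ^ 2 := by
    rw [hfhat_eq, hindep.variance_const_add_sum_mul hL2]
    simp_rw [hvar, ← sum_mul, mul_comm]
  have hgram : ∑ i, a i ^ 2 =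
      ∑ i, ∑ j, (((S i ∩ S j).card : ℝ) / (k : ℝ) ^ 2) * B i X₀ * B j X₀ := by
    simp_rw [a, sum_sq_sum_mul, hw, sum_ite_mem_mul_ite_mem, div_pow, one_pow, mul_one_div]
  refine ⟨by rw [hvar_fhat, hgram], ?_⟩
  obtain ⟨i₀, -⟩ := nonempty_of_sum_ne_zero (ha_sum ▸ one_ne_zero : ∑ i, a i ≠ 0)
  rw [hvar_fhat, div_eq_mul_one_div, ← hvar i₀]
  refine mul_le_mul_of_nonneg_left ?_ (variance_nonneg _ _)
  simpa only [sq] using sum_mul_le_of_le_of_sum_eq_one ha_le ha_nonneg ha_sum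

/-- **Exact variance of the wQISA estimator with k-NN weights.** In the fixed-design
regression model `Y_i = f(X_i) + ε_i` with i.i.d. errors of mean `0` and finite
variance `σε2`, let the weight `w_j` be the `k`-nearest-neighbor weight centered at
`u_j`, i.e. `w_j = 1/k` on the set `S_j` of the `k` design points closest to `u_j` and
`0` elsewhere. Then, with `B_j : ℝ² → [0,1]` forming a partition of unity at `X₀`,
`Var[f̂_w(X₀)] = σε2 · ∑_i ∑_j (k_{i,j}/k²) B_i(X₀) B_j(X₀) ≤ σε2 / k`, where
`k_{i,j} = |S_i ∩ S_j|` is the number of design points common to the `k` nearest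
neighbors of `u_i` and of `u_j`. -/
theorem wQISA_kNN_variance
    {Ω : Type*} [MeasurableSpace Ω] (μ : Measure Ω) [IsProbabilityMeasure μ]
    (N m k : ℕ) (hk : 0 < k) (hkN : k ≤ N)
    (X : Fin N → ℝ × ℝ) (f : ℝ × ℝ → ℝ) (σε2 : ℝ)
    -- the errors: independent, identically distributed, mean 0, variance σε2
    (ε : Fin N → Ω → ℝ)
    (hmeas : ∀ i, Measurable (ε i))
    (hindep : iIndepFun ε μ)
    (hident : ∀ i j, IdentDistrib (ε i) (ε j) μ μ)
    (hL2 : ∀ i, MemLp (ε i) 2 μ)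
    (hmean : ∀ i, μ[ε i] = 0)
    (hvar : ∀ i, variance (ε i) μ = σε2)
    -- the observations
    (Y : Fin N → Ω → ℝ) (hY : ∀ i ω, Y i ω = f (X i) + ε i ω)
    -- nonnegative functions with values in [0,1] forming a partition of unity at X₀
    (B : Fin m → ℝ × ℝ → ℝ) (X₀ : ℝ × ℝ)
    (hB0 : ∀ j v, 0 ≤ B j v) (hB1 : ∀ j v, B j v ≤ 1)
    (hpart : ∑ j, B j X₀ = 1)
    -- the k-NN weights: `S j` is the set of the k design points closest to `u j`,
    -- and `w j` equals `1/k` on it and `0` on the other design points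
    (u : Fin m → ℝ × ℝ) (S : Fin m → Finset (Fin N))
    (hScard : ∀ j, (S j).card = k)
    (hSnear : ∀ j, ∀ i ∈ S j, ∀ i' ∉ S j, dist (X i) (u j) ≤ dist (X i') (u j))
    (w : Fin m → ℝ × ℝ → ℝ)
    (hw : ∀ j i, w j (X i) = if i ∈ S j then (1 : ℝ) / k else 0)
    -- the coefficient estimators and the wQISA estimator at X₀
    (c : Fin m → Ω → ℝ)
    (hc : ∀ j ω, c j ω = (∑ i, Y i ω * w j (X i)) / (∑ i, w j (X i)))
    (fhat : Ω → ℝ) (hfhat : ∀ ω, fhat ω = ∑ j, c j ω * B j X₀) :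
    variance fhat μ =
      σε2 * ∑ i, ∑ j, (((S i ∩ S j).card : ℝ) / (k : ℝ) ^ 2) * B i X₀ * B j X₀ ∧
    variance fhat μ ≤ σε2 / k :=
  wQISA_kNN_variance_general μ N m k hk X f σε2 ε hindep hL2 hvar Y hY B X₀ hB0 hpart S hScard w hw
    c hc fhat hfhat
end
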